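/- arXiv:2209.12489 — 3 statements merged into one kernel-verified Lean document; each statement's English description precedes it below -/
import Mathlib

section
/- Let M ∈ ℝ^{N×n} have rank n with thin SVD M = U₁ Σ Vᵀ, H ∈ ℝ^{N×m}, λ > 0, and define J_P(θ,φ) = ‖f − Mθ − Hφ‖² + λ‖(ΣVᵀ)⁻¹U₁ᵀHφ‖². For any kernel vector v = (v_θ, v_φ) of [M H], J_P(x* + v) = J_P(x*) + λ‖v_θ‖² − λ‖(ΣVᵀ)⁻¹U₁ᵀH φ*‖² + λ‖(ΣVᵀ)⁻¹U₁ᵀH(φ* + v_φ)‖² − λ‖(ΣVᵀ)⁻¹U₁ᵀH v_φ‖². In particular, if x* = (θ*, φ*) with (ΣVᵀ)⁻¹U₁ᵀHφ* = 0, then J_P(x* + v) = J_P(x*) + λ‖v_θ‖². -/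
open Matrix

/-- Expansion of the regularized cost along a kernel direction of `[M H]`:
`J_P(x*+v) = J_P(x*) + λ‖vθ‖² − λ‖(ΣVᵀ)⁻¹U₁ᵀHφ*‖²
  + λ‖(ΣVᵀ)⁻¹U₁ᵀH(φ*+vφ)‖² − λ‖(ΣVᵀ)⁻¹U₁ᵀH vφ‖²`;
in particular, if `(ΣVᵀ)⁻¹U₁ᵀHφ* = 0`, then `J_P(x*+v) = J_P(x*) + λ‖vθ‖²`. -/
theorem regularized_cost_along_kernel (N n m : ℕ)
    (M U₁ : Matrix (Fin N) (Fin n) ℝ) (U₂ : Matrix (Fin N) (Fin (N - n)) ℝ)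
    (H : Matrix (Fin N) (Fin m) ℝ)
    (S V : Matrix (Fin n) (Fin n) ℝ) (d : Fin n → ℝ)
    (hrank : M.rank = n)
    (hS : S = Matrix.diagonal d) (hd : ∀ i, d i ≠ 0)
    (hV : Vᵀ * V = 1) (hV' : V * Vᵀ = 1)
    (hU1 : U₁ᵀ * U₁ = 1) (hU12 : U₁ᵀ * U₂ = 0)
    (hcomp : U₁ * U₁ᵀ + U₂ * U₂ᵀ = 1)
    (hM : M = U₁ * S * Vᵀ)
    (f : Fin N → ℝ) (lam : ℝ) (hlam : 0 < lam)
    (JP : (Fin n → ℝ) → (Fin m → ℝ) → ℝ)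
    (R : (Fin m → ℝ) → Fin n → ℝ)
    (hR : ∀ φ, R φ = (S * Vᵀ)⁻¹ *ᵥ (U₁ᵀ *ᵥ (H *ᵥ φ)))
    (hJP : ∀ θ φ, JP θ φ =
      (f - M *ᵥ θ - H *ᵥ φ) ⬝ᵥ (f - M *ᵥ θ - H *ᵥ φ) + lam * (R φ ⬝ᵥ R φ))
    (θs : Fin n → ℝ) (φs : Fin m → ℝ)
    (vθ : Fin n → ℝ) (vφ : Fin m → ℝ)
    (hker : M *ᵥ vθ + H *ᵥ vφ = 0) :
    JP (θs + vθ) (φs + vφ) =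
      JP θs φs + lam * (vθ ⬝ᵥ vθ) - lam * (R φs ⬝ᵥ R φs)
        + lam * (R (φs + vφ) ⬝ᵥ R (φs + vφ)) - lam * (R vφ ⬝ᵥ R vφ) ∧
    (R φs = 0 → JP (θs + vθ) (φs + vφ) = JP θs φs + lam * (vθ ⬝ᵥ vθ)) := by
  -- SVᵀ invertible
  have hdet : (S * Vᵀ).det ≠ 0 := by
    have hdS : S.det ≠ 0 := by
      rw [hS, Matrix.det_diagonal]
      exact Finset.prod_ne_zero_iff.mpr fun i _ => hd i
    have hdV : Vᵀ.det ≠ 0 := by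
      intro h
      have h2 := congrArg Matrix.det hV
      rw [Matrix.det_mul, h, zero_mul, Matrix.det_one] at h2
      exact zero_ne_one h2
    rw [Matrix.det_mul]; exact mul_ne_zero hdS hdV
  have hinv : (S * Vᵀ)⁻¹ * (S * Vᵀ) = 1 :=
    Matrix.nonsing_inv_mul _ (isUnit_iff_ne_zero.mpr hdet)
  have hU1M : U₁ᵀ * M = S * Vᵀ := by
    rw [hM, ← Matrix.mul_assoc, ← Matrix.mul_assoc, hU1, Matrix.one_mul]
  have hHv : H *ᵥ vφ = -(M *ᵥ vθ) := by
    have := hker; exact eq_neg_of_add_eq_zero_right (by rwa [add_comm] at this)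
  have hRv : R vφ = -vθ := by
    rw [hR, hHv, Matrix.mulVec_neg, Matrix.mulVec_neg, Matrix.mulVec_mulVec,
      Matrix.mulVec_mulVec, Matrix.mul_assoc, hU1M, hinv, Matrix.one_mulVec]
  -- linearity of R
  have hRadd : R (φs + vφ) = R φs + R vφ := by
    simp [hR, Matrix.mulVec_add]
  -- residual unchanged
  have hres : f - M *ᵥ (θs + vθ) - H *ᵥ (φs + vφ) = f - M *ᵥ θs - H *ᵥ φs := by
    rw [Matrix.mulVec_add, Matrix.mulVec_add]
    have := hker
    ext i
    have h0 := congrFun hker i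
    simp only [Pi.add_apply, Pi.zero_apply] at h0
    simp only [Pi.sub_apply, Pi.add_apply]
    linarith
  have hRvRv : R vφ ⬝ᵥ R vφ = vθ ⬝ᵥ vθ := by
    rw [hRv]; simp [dotProduct, mul_comm]
  have main : JP (θs + vθ) (φs + vφ) =
      JP θs φs + lam * (vθ ⬝ᵥ vθ) - lam * (R φs ⬝ᵥ R φs)
        + lam * (R (φs + vφ) ⬝ᵥ R (φs + vφ)) - lam * (R vφ ⬝ᵥ R vφ) := by
    rw [hJP, hJP, hres, hRvRv]; ring
  refine ⟨main, fun h0 => ?_⟩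
  rw [main, h0, hRadd, h0, hRv]
  simp only [zero_add, neg_dotProduct, dotProduct_neg, neg_neg,
    zero_dotProduct]
  ring
end

section
/- Let M ∈ ℝ^{N×n} have rank n with thin SVD M = U₁ Σ Vᵀ, H ∈ ℝ^{N×m}, λ > 0. Suppose x* = (θ*, φ*) satisfies U₁ᵀHφ* = 0, and let v₁ = (0, v_φ¹), v₂ = (v_θ², v_φ²) be kernel vectors of [M H] with v_θ² ≠ 0. Then the regularized cost J_P(θ,φ) = ‖f − Mθ − Hφ‖² + λ‖(ΣVᵀ)⁻¹U₁ᵀHφ‖² satisfies J_P(x* + v₁) < J_P(x* + v₂). -/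
/-!
Along a kernel direction `(v_θ, v_φ)` of `[M H]` the residual `f - Mθ - Hφ` does not move, so
only the regularizer distinguishes `x* + v₁` from `x* + v₂`. Writing `M = U₁ A` with `A = ΣVᵀ`
invertible and `U₁ᵀU₁ = 1`, the kernel equation `M v_θ + H v_φ = 0` gives
`A⁻¹U₁ᵀH v_φ = -v_θ`; together with `U₁ᵀHφ* = 0` the regularizer at `x* + v` is `λ‖v_θ‖²`,
which vanishes for `v₁` and is positive for `v₂`.
-/

open Matrix

section Kernel

variable {R ι κ μ : Type*} [CommRing R] [Fintype κ] [Fintype μ]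

theorem sub_mulVec_add_of_mulVec_add_eq_zero {M : Matrix ι κ R} {H : Matrix ι μ R}
    {vθ : κ → R} {vφ : μ → R} (hv : M *ᵥ vθ + H *ᵥ vφ = 0) (f : ι → R) (θ : κ → R)
    (φ : μ → R) : f - M *ᵥ (θ + vθ) - H *ᵥ (φ + vφ) = f - M *ᵥ θ - H *ᵥ φ := by
  rw [mulVec_add, mulVec_add, eq_neg_of_add_eq_zero_right hv]
  abel

theorem inv_mulVec_transpose_mulVec_eq_neg [Fintype ι] [DecidableEq κ] {U : Matrix ι κ R}
    {A : Matrix κ κ R} {H : Matrix ι μ R} (hU : Uᵀ * U = 1) (hA : IsUnit A.det)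
    {vθ : κ → R} {vφ : μ → R} (hv : (U * A) *ᵥ vθ + H *ᵥ vφ = 0) :
    A⁻¹ *ᵥ (Uᵀ *ᵥ (H *ᵥ vφ)) = -vθ := by
  rw [eq_neg_of_add_eq_zero_right hv, mulVec_neg, mulVec_neg, mulVec_mulVec, mulVec_mulVec,
    Matrix.mul_assoc A⁻¹, ← Matrix.mul_assoc Uᵀ, hU, Matrix.one_mul, nonsing_inv_mul _ hA,
    one_mulVec]

end Kernel

section RegularizedCost

variable {ι κ μ : Type*} [Fintype ι] [Fintype κ] [Fintype μ] [DecidableEq κ]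

/-- The paper's `J_P` is the case `U = U₁`, `A = ΣVᵀ`. -/
noncomputable def regularizedCost (M : Matrix ι κ ℝ) (H : Matrix ι μ ℝ) (U : Matrix ι κ ℝ)
    (A : Matrix κ κ ℝ) (f : ι → ℝ) (lam : ℝ) (θ : κ → ℝ) (φ : μ → ℝ) : ℝ :=
  (f - M *ᵥ θ - H *ᵥ φ) ⬝ᵥ (f - M *ᵥ θ - H *ᵥ φ) +
    lam * ((A⁻¹ *ᵥ (Uᵀ *ᵥ (H *ᵥ φ))) ⬝ᵥ (A⁻¹ *ᵥ (Uᵀ *ᵥ (H *ᵥ φ))))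

theorem regularizedCost_add_of_mulVec_add_eq_zero {U : Matrix ι κ ℝ} {A : Matrix κ κ ℝ}
    {H : Matrix ι μ ℝ} (hU : Uᵀ * U = 1) (hA : IsUnit A.det) (f : ι → ℝ) (lam : ℝ)
    (θ : κ → ℝ) {φ : μ → ℝ} (hφ : Uᵀ *ᵥ (H *ᵥ φ) = 0) {vθ : κ → ℝ} {vφ : μ → ℝ}
    (hv : (U * A) *ᵥ vθ + H *ᵥ vφ = 0) :
    regularizedCost (U * A) H U A f lam (θ + vθ) (φ + vφ) =
      (f - (U * A) *ᵥ θ - H *ᵥ φ) ⬝ᵥ (f - (U * A) *ᵥ θ - H *ᵥ φ) + lam * (vθ ⬝ᵥ vθ) := by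
  rw [regularizedCost, sub_mulVec_add_of_mulVec_add_eq_zero hv, mulVec_add, mulVec_add, hφ,
    zero_add, inv_mulVec_transpose_mulVec_eq_neg hU hA hv, neg_dotProduct, dotProduct_neg,
    neg_neg]

end RegularizedCost

theorem regularized_cost_strict_general (N n m : ℕ)
    (M U₁ : Matrix (Fin N) (Fin n) ℝ)
    (H : Matrix (Fin N) (Fin m) ℝ)
    (S V : Matrix (Fin n) (Fin n) ℝ) (d : Fin n → ℝ)
    (hS : S = Matrix.diagonal d) (hd : ∀ i, d i ≠ 0)
    (hV : Vᵀ * V = 1)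
    (hU1 : U₁ᵀ * U₁ = 1)
    (hM : M = U₁ * S * Vᵀ)
    (f : Fin N → ℝ) (lam : ℝ) (hlam : 0 < lam)
    (JP : (Fin n → ℝ) → (Fin m → ℝ) → ℝ)
    (hJP : ∀ θ φ, JP θ φ =
      (f - M *ᵥ θ - H *ᵥ φ) ⬝ᵥ (f - M *ᵥ θ - H *ᵥ φ) +
      lam * (((S * Vᵀ)⁻¹ *ᵥ (U₁ᵀ *ᵥ (H *ᵥ φ))) ⬝ᵥ ((S * Vᵀ)⁻¹ *ᵥ (U₁ᵀ *ᵥ (H *ᵥ φ)))))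
    (θs : Fin n → ℝ) (φs : Fin m → ℝ) (hφs : U₁ᵀ *ᵥ (H *ᵥ φs) = 0)
    (vφ₁ : Fin m → ℝ) (hv₁ : M *ᵥ (0 : Fin n → ℝ) + H *ᵥ vφ₁ = 0)
    (vθ₂ : Fin n → ℝ) (vφ₂ : Fin m → ℝ) (hv₂ : M *ᵥ vθ₂ + H *ᵥ vφ₂ = 0)
    (hvθ₂ : vθ₂ ≠ 0) :
    JP (θs + 0) (φs + vφ₁) < JP (θs + vθ₂) (φs + vφ₂) := by
  have hM' : M = U₁ * (S * Vᵀ) := by rw [hM, Matrix.mul_assoc]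
  have hSV : IsUnit (S * Vᵀ).det := by
    rw [det_mul, hS, det_diagonal]
    exact (Finset.prod_ne_zero_iff.mpr fun i _ => hd i).isUnit.mul
      (isUnit_det_of_right_inverse hV)
  obtain rfl : JP = regularizedCost M H U₁ (S * Vᵀ) f lam := funext₂ hJP
  subst hM'
  rw [regularizedCost_add_of_mulVec_add_eq_zero hU1 hSV f lam θs hφs hv₁,
    regularizedCost_add_of_mulVec_add_eq_zero hU1 hSV f lam θs hφs hv₂, dotProduct_zero,
    mul_zero, add_zero]
  have hvθ₂_pos : 0 < vθ₂ ⬝ᵥ vθ₂ := by simpa using dotProduct_star_self_pos_iff.mpr hvθ₂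
  exact lt_add_of_pos_right _ (mul_pos hlam hvθ₂_pos)

/-- Strict decrease: with `U₁ᵀHφ* = 0`, along kernel directions `v₁ = (0, vφ¹)`
and `v₂ = (vθ², vφ²)` of `[M H]` with `vθ² ≠ 0`, the regularized cost satisfies
`J_P(x* + v₁) < J_P(x* + v₂)`. -/
theorem regularized_cost_strict (N n m : ℕ)
    (M U₁ : Matrix (Fin N) (Fin n) ℝ) (U₂ : Matrix (Fin N) (Fin (N - n)) ℝ)
    (H : Matrix (Fin N) (Fin m) ℝ)
    (S V : Matrix (Fin n) (Fin n) ℝ) (d : Fin n → ℝ)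
    (hrank : M.rank = n)
    (hS : S = Matrix.diagonal d) (hd : ∀ i, d i ≠ 0)
    (hV : Vᵀ * V = 1) (hV' : V * Vᵀ = 1)
    (hU1 : U₁ᵀ * U₁ = 1) (hU12 : U₁ᵀ * U₂ = 0)
    (hcomp : U₁ * U₁ᵀ + U₂ * U₂ᵀ = 1)
    (hM : M = U₁ * S * Vᵀ)
    (f : Fin N → ℝ) (lam : ℝ) (hlam : 0 < lam)
    (JP : (Fin n → ℝ) → (Fin m → ℝ) → ℝ)
    (hJP : ∀ θ φ, JP θ φ =
      (f - M *ᵥ θ - H *ᵥ φ) ⬝ᵥ (f - M *ᵥ θ - H *ᵥ φ) +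
      lam * (((S * Vᵀ)⁻¹ *ᵥ (U₁ᵀ *ᵥ (H *ᵥ φ))) ⬝ᵥ ((S * Vᵀ)⁻¹ *ᵥ (U₁ᵀ *ᵥ (H *ᵥ φ)))))
    (θs : Fin n → ℝ) (φs : Fin m → ℝ) (hφs : U₁ᵀ *ᵥ (H *ᵥ φs) = 0)
    (vφ₁ : Fin m → ℝ) (hv₁ : M *ᵥ (0 : Fin n → ℝ) + H *ᵥ vφ₁ = 0)
    (vθ₂ : Fin n → ℝ) (vφ₂ : Fin m → ℝ) (hv₂ : M *ᵥ vθ₂ + H *ᵥ vφ₂ = 0)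
    (hvθ₂ : vθ₂ ≠ 0) :
    JP (θs + 0) (φs + vφ₁) < JP (θs + vθ₂) (φs + vφ₂) :=
  regularized_cost_strict_general N n m M U₁ H S V d hS hd hV hU1 hM f lam hlam JP hJP θs φs hφs vφ₁
    hv₁ vθ₂ vφ₂ hv₂ hvθ₂
end

section
/- Let M ∈ ℝ^{N×n} have rank n with thin SVD M = U₁ΣVᵀ, let H ∈ ℝ^{N×m}, f ∈ ℝ^N, λ > 0. The regularized problem min_{θ,φ} ‖f − Mθ − Hφ‖² + λ‖(ΣVᵀ)⁻¹U₁ᵀHφ‖² has the property that any two minimizers (θ₁, φ₁) and (θ₂, φ₂) satisfy θ₁ = θ₂. -/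
open Matrix

lemma para_aux {k : ℕ} (a b : Fin k → ℝ) :
    (((1:ℝ)/2) • (a + b)) ⬝ᵥ (((1:ℝ)/2) • (a + b)) +
      (((1:ℝ)/2) • (a - b)) ⬝ᵥ (((1:ℝ)/2) • (a - b)) =
      (a ⬝ᵥ a + b ⬝ᵥ b) / 2 := by
  simp only [dotProduct, Pi.smul_apply, Pi.add_apply, Pi.sub_apply, smul_eq_mul]
  rw [← Finset.sum_add_distrib, ← Finset.sum_add_distrib, Finset.sum_div]
  apply Finset.sum_congr rfl
  intros; ring

lemma dot_self_nonneg' {k : ℕ} (a : Fin k → ℝ) : 0 ≤ a ⬝ᵥ a := by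
  apply Finset.sum_nonneg
  intros; exact mul_self_nonneg _

lemma dot_self_eq_zero' {k : ℕ} (a : Fin k → ℝ) (h : a ⬝ᵥ a = 0) : a = 0 := by
  funext i
  have := (Finset.sum_eq_zero_iff_of_nonneg (fun j _ => mul_self_nonneg (a j))).mp h i (Finset.mem_univ i)
  exact mul_self_eq_zero.mp this

/-- Any two minimizers of the orthogonal-projection-regularized criterion
have the same model coefficients `θ`. -/
theorem regularized_minimizer_theta_unique (N n m : ℕ)
    (M U₁ : Matrix (Fin N) (Fin n) ℝ)
    (H : Matrix (Fin N) (Fin m) ℝ)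
    (S V : Matrix (Fin n) (Fin n) ℝ) (d : Fin n → ℝ)
    (hrank : M.rank = n)
    (hS : S = Matrix.diagonal d) (hd : ∀ i, d i ≠ 0)
    (hV : Vᵀ * V = 1) (hV' : V * Vᵀ = 1)
    (hU1 : U₁ᵀ * U₁ = 1)
    (hM : M = U₁ * S * Vᵀ)
    (f : Fin N → ℝ) (lam : ℝ) (hlam : 0 < lam)
    (JP : (Fin n → ℝ) → (Fin m → ℝ) → ℝ)
    (hJP : ∀ θ φ, JP θ φ =
      (f - M *ᵥ θ - H *ᵥ φ) ⬝ᵥ (f - M *ᵥ θ - H *ᵥ φ) +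
      lam * (((S * Vᵀ)⁻¹ *ᵥ (U₁ᵀ *ᵥ (H *ᵥ φ))) ⬝ᵥ ((S * Vᵀ)⁻¹ *ᵥ (U₁ᵀ *ᵥ (H *ᵥ φ)))))
    (θ₁ θ₂ : Fin n → ℝ) (φ₁ φ₂ : Fin m → ℝ)
    (hmin₁ : ∀ θ φ, JP θ₁ φ₁ ≤ JP θ φ)
    (hmin₂ : ∀ θ φ, JP θ₂ φ₂ ≤ JP θ φ) :
    θ₁ = θ₂ := by
  -- abbreviations
  set A := (S * Vᵀ)⁻¹ with hA
  set r₁ := f - M *ᵥ θ₁ - H *ᵥ φ₁ with hr₁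
  set r₂ := f - M *ᵥ θ₂ - H *ᵥ φ₂ with hr₂
  set z₁ := A *ᵥ (U₁ᵀ *ᵥ (H *ᵥ φ₁)) with hz₁
  set z₂ := A *ᵥ (U₁ᵀ *ᵥ (H *ᵥ φ₂)) with hz₂
  -- SVᵀ is invertible
  have hdetS : S.det = ∏ i, d i := by rw [hS, Matrix.det_diagonal]
  have hdetS' : S.det ≠ 0 := by
    rw [hdetS]; exact Finset.prod_ne_zero_iff.mpr fun i _ => hd i
  have hdetV : V.det * Vᵀ.det = 1 := by
    rw [← Matrix.det_mul, hV', Matrix.det_one]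
  have hdetVT : Vᵀ.det ≠ 0 := by
    intro h; rw [h, mul_zero] at hdetV; exact zero_ne_one hdetV
  have hdet : (S * Vᵀ).det ≠ 0 := by
    rw [Matrix.det_mul]; exact mul_ne_zero hdetS' hdetVT
  have hinv : A * (S * Vᵀ) = 1 := Matrix.nonsing_inv_mul _ (isUnit_iff_ne_zero.mpr hdet)
  have hinv' : (S * Vᵀ) * A = 1 := Matrix.mul_nonsing_inv _ (isUnit_iff_ne_zero.mpr hdet)
  -- the two minima agree
  have hc : JP θ₁ φ₁ = JP θ₂ φ₂ := le_antisymm (hmin₁ θ₂ φ₂) (hmin₂ θ₁ φ₁)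
  -- midpoint
  set θm := ((1:ℝ)/2) • (θ₁ + θ₂) with hθm
  set φm := ((1:ℝ)/2) • (φ₁ + φ₂) with hφm
  have hres : f - M *ᵥ θm - H *ᵥ φm = ((1:ℝ)/2) • (r₁ + r₂) := by
    rw [hθm, hφm, hr₁, hr₂]
    funext i
    simp [Matrix.mulVec_smul, Matrix.mulVec_add]
    ring
  have hzm : A *ᵥ (U₁ᵀ *ᵥ (H *ᵥ φm)) = ((1:ℝ)/2) • (z₁ + z₂) := by
    rw [hφm, hz₁, hz₂]
    funext i
    simp [Matrix.mulVec_smul, Matrix.mulVec_add]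
    ring
  have hJm : JP θm φm = ((1:ℝ)/2) • (r₁ + r₂) ⬝ᵥ ((1:ℝ)/2) • (r₁ + r₂) +
      lam * (((1:ℝ)/2) • (z₁ + z₂) ⬝ᵥ ((1:ℝ)/2) • (z₁ + z₂)) := by
    rw [hJP, hres, hzm]
  have hJ1 : JP θ₁ φ₁ = r₁ ⬝ᵥ r₁ + lam * (z₁ ⬝ᵥ z₁) := by rw [hJP]
  have hJ2 : JP θ₂ φ₂ = r₂ ⬝ᵥ r₂ + lam * (z₂ ⬝ᵥ z₂) := by rw [hJP]
  have hpar1 := para_aux r₁ r₂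
  have hpar2 := para_aux z₁ z₂
  have hle := hmin₁ θm φm
  -- deduce that both difference terms vanish
  have hpar2l : lam * ((((1:ℝ)/2) • (z₁ + z₂)) ⬝ᵥ (((1:ℝ)/2) • (z₁ + z₂))) =
      lam * (z₁ ⬝ᵥ z₁) / 2 + lam * (z₂ ⬝ᵥ z₂) / 2 -
      lam * ((((1:ℝ)/2) • (z₁ - z₂)) ⬝ᵥ (((1:ℝ)/2) • (z₁ - z₂))) := by
    linear_combination lam * hpar2
  have h1 := dot_self_nonneg' (((1:ℝ)/2) • (r₁ - r₂))
  have h2 := dot_self_nonneg' (((1:ℝ)/2) • (z₁ - z₂))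
  have h2l : 0 ≤ lam * ((((1:ℝ)/2) • (z₁ - z₂)) ⬝ᵥ (((1:ℝ)/2) • (z₁ - z₂))) :=
    mul_nonneg hlam.le h2
  have hdr0 : (((1:ℝ)/2) • (r₁ - r₂)) ⬝ᵥ (((1:ℝ)/2) • (r₁ - r₂)) = 0 := by
    linarith [hle, hc, hJm, hJ1, hJ2, hpar1, hpar2l]
  have hdz0 : (((1:ℝ)/2) • (z₁ - z₂)) ⬝ᵥ (((1:ℝ)/2) • (z₁ - z₂)) = 0 := by
    have hz0 : lam * ((((1:ℝ)/2) • (z₁ - z₂)) ⬝ᵥ (((1:ℝ)/2) • (z₁ - z₂))) = 0 := by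
      linarith [hle, hc, hJm, hJ1, hJ2, hpar1, hpar2l]
    rcases mul_eq_zero.mp hz0 with h | h
    · exact absurd h hlam.ne'
    · exact h
  have hr : r₁ = r₂ := by
    have h := dot_self_eq_zero' _ hdr0
    rcases smul_eq_zero.mp h with h | h
    · norm_num at h
    · exact sub_eq_zero.mp h
  have hz : z₁ = z₂ := by
    have h := dot_self_eq_zero' _ hdz0
    rcases smul_eq_zero.mp h with h | h
    · norm_num at h
    · exact sub_eq_zero.mp h
  have key : ∀ w : Fin n → ℝ, (S * Vᵀ) *ᵥ (A *ᵥ w) = w := fun w => by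
    rw [Matrix.mulVec_mulVec, hinv', Matrix.one_mulVec]
  have key' : ∀ w : Fin n → ℝ, A *ᵥ ((S * Vᵀ) *ᵥ w) = w := fun w => by
    rw [Matrix.mulVec_mulVec, hinv, Matrix.one_mulVec]
  have hu : U₁ᵀ *ᵥ (H *ᵥ φ₁) = U₁ᵀ *ᵥ (H *ᵥ φ₂) := by
    have h : (S * Vᵀ) *ᵥ (A *ᵥ (U₁ᵀ *ᵥ (H *ᵥ φ₁))) =
        (S * Vᵀ) *ᵥ (A *ᵥ (U₁ᵀ *ᵥ (H *ᵥ φ₂))) := by rw [← hz₁, ← hz₂, hz]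
    rwa [key, key] at h
  have hMeq : M *ᵥ θ₁ + H *ᵥ φ₁ = M *ᵥ θ₂ + H *ᵥ φ₂ := by
    rw [hr₁, hr₂] at hr
    funext i
    have := congrFun hr i
    simp only [Pi.sub_apply, Pi.add_apply] at this ⊢
    linarith
  have hUM : U₁ᵀ * M = S * Vᵀ := by
    rw [hM, Matrix.mul_assoc U₁ S Vᵀ, ← Matrix.mul_assoc U₁ᵀ U₁ (S * Vᵀ), hU1,
      Matrix.one_mul]
  have hu' : (U₁ᵀ * H) *ᵥ φ₁ = (U₁ᵀ * H) *ᵥ φ₂ := by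
    rw [← Matrix.mulVec_mulVec, ← Matrix.mulVec_mulVec]; exact hu
  have hSV : (S * Vᵀ) *ᵥ θ₁ = (S * Vᵀ) *ᵥ θ₂ := by
    have h := congrArg (fun v => U₁ᵀ *ᵥ v) hMeq
    simp only [Matrix.mulVec_add, Matrix.mulVec_mulVec] at h
    rw [hUM, hu'] at h
    exact add_right_cancel h
  have h := congrArg (fun v => A *ᵥ v) hSV
  rwa [key', key'] at h
end
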